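/- arXiv:1706.06572 — 2 statements merged into one kernel-verified Lean document; each statement's English description precedes it below -/
import Mathlib

section
/- Let G ⊆ ℕ^n be a finite set of exponent vectors, all distinct, with componentwise lcm structure, and let σ, τ ⊆ G be two subsets with lcm(σ) = lcm(τ). If m ∈ G is dominant in G, then m ∈ σ if and only if m ∈ τ. (Basis elements of the Taylor resolution with equal multidegree contain the same dominant monomials.) -/
/-- `m` is dominant in a finite set `G` of exponent vectors if some coordinate of `m`
strictly exceeds the corresponding coordinate of every other element of `G`. -/
def Dominant {n : ℕ} (G : Finset (Fin n → ℕ)) (m : Fin n → ℕ) : Prop :=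
  ∃ j : Fin n, ∀ g ∈ G, g ≠ m → g j < m j

lemma dominant_mem_of_lcm_aux (n : ℕ) (G : Finset (Fin n → ℕ))
    (hne : ∀ g ∈ G, g ≠ 0)
    (σ τ : Finset (Fin n → ℕ)) (hτ : τ ⊆ G)
    (hlcm : σ.sup id = τ.sup id)
    (m : Fin n → ℕ) (hm : m ∈ G) (hdom : Dominant G m) (hmσ : m ∈ σ) : m ∈ τ := by
  obtain ⟨j, hj⟩ := hdom
  have hle : m ≤ τ.sup id := hlcm ▸ Finset.le_sup (f := id) hmσ
  rcases τ.eq_empty_or_nonempty with rfl | hτne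
  · exfalso
    apply hne m hm
    simp only [Finset.sup_empty] at hle
    exact le_antisymm hle (by intro i; exact Nat.zero_le _)
  · obtain ⟨g, hgτ, hg⟩ := Finset.exists_mem_eq_sup τ hτne (fun g => g j)
    have hsup : (τ.sup id) j = τ.sup (fun g => g j) := by
      simp [Finset.sup_apply]
    have hgj : m j ≤ g j := by
      have := hle j
      rw [hsup, hg] at this
      exact this
    by_cases hgm : g = m
    · exact hgm ▸ hgτ
    · exact absurd hgj (not_le.mpr (hj g (hτ hgτ) hgm))

/-- Basis elements (faces) of the Taylor resolution with equal multidegree contain the same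
dominant monomials: if `G ⊆ ℕ^n` is a finite set of (nonunit) monomials, `σ, τ ⊆ G` have equal
lcm (componentwise max, `0` for the empty set), and `m ∈ G` is dominant in `G`, then
`m ∈ σ ↔ m ∈ τ`. -/
theorem dominant_mem_iff_of_lcm_eq (n : ℕ) (G : Finset (Fin n → ℕ))
    (hne : ∀ g ∈ G, g ≠ 0)
    (σ τ : Finset (Fin n → ℕ)) (hσ : σ ⊆ G) (hτ : τ ⊆ G)
    (hlcm : σ.sup id = τ.sup id)
    (m : Fin n → ℕ) (hm : m ∈ G) (hdom : Dominant G m) :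
    m ∈ σ ↔ m ∈ τ :=
  ⟨dominant_mem_of_lcm_aux n G hne σ τ hτ hlcm m hm hdom,
   dominant_mem_of_lcm_aux n G hne τ σ hσ hlcm.symm m hm hdom⟩
end

section
/- Let G ⊆ ℕ^n be a finite set (minimal monomial generating set) and suppose G is almost generic with distinguished index i: for every j ≠ i, no value ≥ 1 is taken at coordinate j by two distinct elements of G. If |G| ≥ 2, then G contains at least one dominant element. -/
/-- If `G ⊆ ℕ^n` is a finite antichain (a minimal monomial generating set) with at least two
elements which is almost generic with distinguished index `i` (no value `≥ 1` is taken at a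
coordinate `j ≠ i` by two distinct elements of `G`), and some element of `G` has a positive
coordinate `j ≠ i`, then `G` contains a dominant element. -/
theorem almostGeneric_has_dominant (n : ℕ) (G : Finset (Fin n → ℕ)) (i : Fin n)
    (hmin : ∀ g ∈ G, ∀ g' ∈ G, g ≤ g' → g = g')
    (hAG : ∀ j : Fin n, j ≠ i → ∀ g ∈ G, ∀ g' ∈ G, g ≠ g' → g j = g' j → g j = 0)
    (hcard : 2 ≤ G.card)
    (hpos : ∃ g ∈ G, ∃ j : Fin n, j ≠ i ∧ 1 ≤ g j) :
    ∃ m ∈ G, Dominant G m := by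
  obtain ⟨g0, hg0, j, hji, hg0j⟩ := hpos
  obtain ⟨m, hm, hmax⟩ := G.exists_max_image (fun g => g j) ⟨g0, hg0⟩
  refine ⟨m, hm, j, fun g hg hgm => ?_⟩
  have hle : g j ≤ m j := hmax g hg
  rcases lt_or_eq_of_le hle with h | h
  · exact h
  · exfalso
    have h0 : g j = 0 := hAG j hji g hg m hm hgm h
    have : 1 ≤ m j := le_trans hg0j (hmax g0 hg0)
    omega
end
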